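/- arXiv:1708.08897 — 2 statements merged into one kernel-verified Lean document; each statement's English description precedes it below -/
import Mathlib

section
/- Let c_x = cos(p_x), c_y = cos(p_y), c_z = cos(p_z) and s_x = sin(p_x), etc., with p_x, p_y, p_z ∈ (−π, π]. Then c_x c_y c_z − s_x s_y s_z = 1 if and only if either c_x c_y c_z = 1 or s_x s_y s_z = −1; consequently there are exactly eight triples (p_x,p_y,p_z) satisfying c_x c_y c_z − s_x s_y s_z = 1, namely (0,0,0), the three permutations with two components π and one 0, and the four triples with all components ±π/2 having an odd number of −π/2 entries. -/
set_option maxHeartbeats 1000000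

open Real

private lemma aux_cos_one {p : ℝ} (h1 : -π < p) (h2 : p ≤ π) (hc : cos p = 1) : p = 0 := by
  have hπ := Real.pi_pos
  exact (Real.cos_eq_one_iff_of_lt_of_lt (by linarith) (by linarith)).1 hc

private lemma aux_cos_neg_one {p : ℝ} (h1 : -π < p) (h2 : p ≤ π) (hc : cos p = -1) : p = π := by
  have hπ := Real.pi_pos
  have h : cos (π - p) = 1 := by rw [Real.cos_pi_sub, hc]; norm_num
  have := (Real.cos_eq_one_iff_of_lt_of_lt (x := π - p) (by linarith) (by linarith)).1 h
  linarith

private lemma aux_sin_one {p : ℝ} (h1 : -π < p) (h2 : p ≤ π) (hc : sin p = 1) : p = π / 2 := by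
  have hπ := Real.pi_pos
  have h : cos (π / 2 - p) = 1 := by rw [Real.cos_pi_div_two_sub, hc]
  have := (Real.cos_eq_one_iff_of_lt_of_lt (x := π / 2 - p) (by linarith) (by linarith)).1 h
  linarith

private lemma aux_sin_neg_one {p : ℝ} (h1 : -π < p) (h2 : p ≤ π) (hc : sin p = -1) :
    p = -(π / 2) := by
  have hπ := Real.pi_pos
  have h : cos (p + π / 2) = 1 := by rw [Real.cos_add_pi_div_two, hc]; norm_num
  have := (Real.cos_eq_one_iff_of_lt_of_lt (x := p + π / 2) (by linarith) (by linarith)).1 h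
  linarith

/-- With `c_b = cos p_b`, `s_b = sin p_b` and `p_x, p_y, p_z ∈ (−π, π]`:
`c_x c_y c_z − s_x s_y s_z = 1` iff `c_x c_y c_z = 1` or `s_x s_y s_z = −1`, and the
solution set consists of exactly the eight listed triples. -/
theorem cos_sin_doubler_characterization (px py pz : ℝ)
    (hx : px ∈ Set.Ioc (-π) π) (hy : py ∈ Set.Ioc (-π) π) (hz : pz ∈ Set.Ioc (-π) π) :
    (cos px * cos py * cos pz - sin px * sin py * sin pz = 1 ↔
      (cos px * cos py * cos pz = 1 ∨ sin px * sin py * sin pz = -1)) ∧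
    (cos px * cos py * cos pz - sin px * sin py * sin pz = 1 ↔
      (px, py, pz) ∈ ({(0, 0, 0), (π, π, 0), (π, 0, π), (0, π, π),
        (-(π/2), π/2, π/2), (π/2, -(π/2), π/2), (π/2, π/2, -(π/2)),
        (-(π/2), -(π/2), -(π/2))} : Set (ℝ × ℝ × ℝ))) := by
  obtain ⟨hx1, hx2⟩ := hx
  obtain ⟨hy1, hy2⟩ := hy
  obtain ⟨hz1, hz2⟩ := hz
  have pyx := Real.sin_sq_add_cos_sq px
  have pyy := Real.sin_sq_add_cos_sq py
  have pyz := Real.sin_sq_add_cos_sq pz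
  -- membership as a disjunction
  have memiff : (px, py, pz) ∈ ({(0, 0, 0), (π, π, 0), (π, 0, π), (0, π, π),
        (-(π/2), π/2, π/2), (π/2, -(π/2), π/2), (π/2, π/2, -(π/2)),
        (-(π/2), -(π/2), -(π/2))} : Set (ℝ × ℝ × ℝ)) ↔
      (px = 0 ∧ py = 0 ∧ pz = 0) ∨ (px = π ∧ py = π ∧ pz = 0) ∨
      (px = π ∧ py = 0 ∧ pz = π) ∨ (px = 0 ∧ py = π ∧ pz = π) ∨
      (px = -(π/2) ∧ py = π/2 ∧ pz = π/2) ∨ (px = π/2 ∧ py = -(π/2) ∧ pz = π/2) ∨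
      (px = π/2 ∧ py = π/2 ∧ pz = -(π/2)) ∨
      (px = -(π/2) ∧ py = -(π/2) ∧ pz = -(π/2)) := by
    simp [Set.mem_insert_iff, Set.mem_singleton_iff, Prod.ext_iff, and_assoc]
  -- forward: equation implies the eight points
  have A : cos px * cos py * cos pz - sin px * sin py * sin pz = 1 →
      (px = 0 ∧ py = 0 ∧ pz = 0) ∨ (px = π ∧ py = π ∧ pz = 0) ∨
      (px = π ∧ py = 0 ∧ pz = π) ∨ (px = 0 ∧ py = π ∧ pz = π) ∨
      (px = -(π/2) ∧ py = π/2 ∧ pz = π/2) ∨ (px = π/2 ∧ py = -(π/2) ∧ pz = π/2) ∨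
      (px = π/2 ∧ py = π/2 ∧ pz = -(π/2)) ∨
      (px = -(π/2) ∧ py = -(π/2) ∧ pz = -(π/2)) := by
    intro h
    have key : (cos pz - cos px * cos py)^2 + (sin pz + sin px * sin py)^2 +
        (cos px * sin py)^2 + (sin px * cos py)^2 = 0 := by nlinarith [pyx, pyy, pyz]
    have n1 := sq_nonneg (cos pz - cos px * cos py)
    have n2 := sq_nonneg (sin pz + sin px * sin py)
    have n3 := sq_nonneg (cos px * sin py)
    have n4 := sq_nonneg (sin px * cos py)
    have q1 : (cos pz - cos px * cos py)^2 = 0 := by linarith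
    have q2 : (sin pz + sin px * sin py)^2 = 0 := by linarith
    have q3 : (cos px * sin py)^2 = 0 := by linarith
    have q4 : (sin px * cos py)^2 = 0 := by linarith
    have h1 : cos pz = cos px * cos py := by
      have := (pow_eq_zero_iff (two_ne_zero)).1 q1; linarith
    have h2 : sin pz = -(sin px * sin py) := by
      have := (pow_eq_zero_iff (two_ne_zero)).1 q2; linarith
    have h3 : cos px * sin py = 0 := (pow_eq_zero_iff (two_ne_zero)).1 q3
    have h4 : sin px * cos py = 0 := (pow_eq_zero_iff (two_ne_zero)).1 q4
    rcases mul_eq_zero.1 h3 with hcx | hsy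
    · -- cos px = 0
      have hsx : sin px * sin px = 1 := by nlinarith [pyx]
      have hsxne : sin px ≠ 0 := by
        intro h0; rw [h0] at hsx; norm_num at hsx
      have hcy : cos py = 0 := by
        rcases mul_eq_zero.1 h4 with h' | h'
        · exact absurd h' hsxne
        · exact h'
      have hsy : sin py * sin py = 1 := by nlinarith [pyy]
      rcases mul_self_eq_one_iff.1 hsx with hx' | hx' <;>
        rcases mul_self_eq_one_iff.1 hsy with hy' | hy'
      · have hz' : sin pz = -1 := by rw [h2, hx', hy']; norm_num
        exact Or.inr (Or.inr (Or.inr (Or.inr (Or.inr (Or.inr (Or.inl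
          ⟨aux_sin_one hx1 hx2 hx', aux_sin_one hy1 hy2 hy',
            aux_sin_neg_one hz1 hz2 hz'⟩))))))
      · have hz' : sin pz = 1 := by rw [h2, hx', hy']; norm_num
        exact Or.inr (Or.inr (Or.inr (Or.inr (Or.inr (Or.inl
          ⟨aux_sin_one hx1 hx2 hx', aux_sin_neg_one hy1 hy2 hy',
            aux_sin_one hz1 hz2 hz'⟩)))))
      · have hz' : sin pz = 1 := by rw [h2, hx', hy']; norm_num
        exact Or.inr (Or.inr (Or.inr (Or.inr (Or.inl
          ⟨aux_sin_neg_one hx1 hx2 hx', aux_sin_one hy1 hy2 hy',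
            aux_sin_one hz1 hz2 hz'⟩))))
      · have hz' : sin pz = -1 := by rw [h2, hx', hy']; norm_num
        exact Or.inr (Or.inr (Or.inr (Or.inr (Or.inr (Or.inr (Or.inr
          ⟨aux_sin_neg_one hx1 hx2 hx', aux_sin_neg_one hy1 hy2 hy',
            aux_sin_neg_one hz1 hz2 hz'⟩))))))
    · -- sin py = 0
      have hcy : cos py * cos py = 1 := by nlinarith [pyy]
      have hcyne : cos py ≠ 0 := by
        intro h0; rw [h0] at hcy; norm_num at hcy
      have hsx : sin px = 0 := by
        rcases mul_eq_zero.1 h4 with h' | h'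
        · exact h'
        · exact absurd h' hcyne
      have hcx : cos px * cos px = 1 := by nlinarith [pyx]
      have hsz : sin pz = 0 := by rw [h2, hsx]; ring
      rcases mul_self_eq_one_iff.1 hcx with hx' | hx' <;>
        rcases mul_self_eq_one_iff.1 hcy with hy' | hy'
      · have hz' : cos pz = 1 := by rw [h1, hx', hy']; norm_num
        exact Or.inl ⟨aux_cos_one hx1 hx2 hx', aux_cos_one hy1 hy2 hy',
          aux_cos_one hz1 hz2 hz'⟩
      · have hz' : cos pz = -1 := by rw [h1, hx', hy']; norm_num
        exact Or.inr (Or.inr (Or.inr (Or.inl ⟨aux_cos_one hx1 hx2 hx',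
          aux_cos_neg_one hy1 hy2 hy', aux_cos_neg_one hz1 hz2 hz'⟩)))
      · have hz' : cos pz = -1 := by rw [h1, hx', hy']; norm_num
        exact Or.inr (Or.inr (Or.inl ⟨aux_cos_neg_one hx1 hx2 hx',
          aux_cos_one hy1 hy2 hy', aux_cos_neg_one hz1 hz2 hz'⟩))
      · have hz' : cos pz = 1 := by rw [h1, hx', hy']; norm_num
        exact Or.inr (Or.inl ⟨aux_cos_neg_one hx1 hx2 hx',
          aux_cos_neg_one hy1 hy2 hy', aux_cos_one hz1 hz2 hz'⟩)
  -- the eight points imply ccc = 1 or sss = -1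
  have B : ((px = 0 ∧ py = 0 ∧ pz = 0) ∨ (px = π ∧ py = π ∧ pz = 0) ∨
      (px = π ∧ py = 0 ∧ pz = π) ∨ (px = 0 ∧ py = π ∧ pz = π) ∨
      (px = -(π/2) ∧ py = π/2 ∧ pz = π/2) ∨ (px = π/2 ∧ py = -(π/2) ∧ pz = π/2) ∨
      (px = π/2 ∧ py = π/2 ∧ pz = -(π/2)) ∨
      (px = -(π/2) ∧ py = -(π/2) ∧ pz = -(π/2))) →
      (cos px * cos py * cos pz = 1 ∨ sin px * sin py * sin pz = -1) := by
    rintro (⟨e1, e2, e3⟩ | ⟨e1, e2, e3⟩ | ⟨e1, e2, e3⟩ | ⟨e1, e2, e3⟩ |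
      ⟨e1, e2, e3⟩ | ⟨e1, e2, e3⟩ | ⟨e1, e2, e3⟩ | ⟨e1, e2, e3⟩) <;>
      subst e1 <;> subst e2 <;> subst e3
    · left; norm_num
    · left; norm_num [Real.cos_pi]
    · left; norm_num [Real.cos_pi]
    · left; norm_num [Real.cos_pi]
    · right; norm_num [Real.sin_pi_div_two]
    · right; norm_num [Real.sin_pi_div_two]
    · right; norm_num [Real.sin_pi_div_two]
    · right; norm_num [Real.sin_pi_div_two]
  -- (ccc = 1 ∨ sss = -1) implies the equation
  have bound : (cos px * cos py * cos pz)^2 + (sin px * sin py * sin pz)^2 ≤ 1 := by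
    nlinarith [pyx, pyy, pyz, sq_nonneg (cos px * sin py), sq_nonneg (sin px * cos py),
      sq_nonneg (cos px * cos py * sin pz), sq_nonneg (sin px * sin py * cos pz),
      sq_nonneg (cos px * cos py), sq_nonneg (sin px * sin py)]
  have C : (cos px * cos py * cos pz = 1 ∨ sin px * sin py * sin pz = -1) →
      cos px * cos py * cos pz - sin px * sin py * sin pz = 1 := by
    rintro (hc | hc)
    · have : sin px * sin py * sin pz = 0 := by
        nlinarith [bound, sq_nonneg (sin px * sin py * sin pz)]
      rw [hc, this]; ring
    · have : cos px * cos py * cos pz = 0 := by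
        nlinarith [bound, sq_nonneg (cos px * cos py * cos pz)]
      rw [hc, this]; ring
  refine ⟨⟨fun h => B (A h), C⟩, ?_⟩
  rw [memiff]
  exact ⟨A, fun hp => C (B hp)⟩
end

section
/- Let |ψ(t)⟩ = Σ_n c_n e^{−iE_n t}|n⟩ be a state evolving under a Hamiltonian with orthonormal eigenstates |n⟩ and real eigenvalues E_n, with Σ_n |c_n|² = 1. Then for all real t, δt: |⟨ψ(t)|ψ(t+δt)⟩|² ≥ 1 − σ_E² δt², where σ_E² = Σ_n |c_n|² E_n² − (Σ_n |c_n|² E_n)² is the energy variance. -/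
/-!
Each term of the overlap is `|c_n|² e^{-i E_n δt}`, so with `p_n = |c_n|²` its squared modulus is
`Σ_{n,m} p_n p_m cos ((E_n - E_m) δt)`. Bounding `cos x ≥ 1 - x²/2` termwise leaves
`(Σ p)² - ½ Σ_{n,m} p_n p_m (E_n - E_m)² δt²`, and the double sum is `2 σ_E² δt²` once `Σ p = 1`.
-/

open Complex Finset

lemma conj_mul_exp_evolution (c : ℂ) (E t δt : ℝ) :
    (starRingEnd ℂ) (c * exp (-I * E * t)) * (c * exp (-I * E * (t + δt)))
      = (‖c‖ ^ 2 : ℝ) * exp ((-(E * δt) : ℝ) * I) := by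
  have hphase : (starRingEnd ℂ) (exp (-I * E * t)) * exp (-I * E * (t + δt))
      = exp ((-(E * δt) : ℝ) * I) := by
    rw [← exp_conj, ← exp_add]
    congr 1
    simp only [map_mul, map_neg, conj_I, conj_ofReal]
    push_cast
    ring
  rw [map_mul, mul_mul_mul_comm, hphase, ← normSq_eq_conj_mul_self, normSq_eq_norm_sq]

variable {ι : Type*} [Fintype ι]

lemma norm_sq_sum_mul_exp_mul_I (p θ : ι → ℝ) :
    ‖∑ n, (p n : ℂ) * exp (θ n * I)‖ ^ 2 = ∑ n, ∑ m, p n * p m * Real.cos (θ n - θ m) := by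
  rw [← normSq_eq_norm_sq, ← ofReal_re (normSq _), ← mul_conj, map_sum, sum_mul_sum, re_sum]
  refine sum_congr rfl fun n _ => ?_
  rw [re_sum]
  refine sum_congr rfl fun m _ => ?_
  have hterm : (p n : ℂ) * exp (θ n * I) * (starRingEnd ℂ) ((p m : ℂ) * exp (θ m * I))
      = ((p n * p m : ℝ) : ℂ) * exp ((θ n - θ m : ℝ) * I) := by
    rw [map_mul, conj_ofReal, ← exp_conj, map_mul, conj_ofReal, conj_I, mul_mul_mul_comm,
      ← exp_add]
    push_cast
    ring_nf
  rw [hterm, re_ofReal_mul, exp_ofReal_mul_I_re]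

lemma sum_sum_mul_mul_one_sub_sq_div_two (p θ : ι → ℝ) :
    ∑ n, ∑ m, p n * p m * (1 - (θ n - θ m) ^ 2 / 2)
      = (∑ n, p n) ^ 2 - ((∑ n, p n) * ∑ n, p n * θ n ^ 2 - (∑ n, p n * θ n) ^ 2) := by
  have hexpand : ∀ n m, p n * p m * (1 - (θ n - θ m) ^ 2 / 2)
      = p n * p m - 2⁻¹ * (p n * θ n ^ 2) * p m + p n * θ n * (p m * θ m)
        - 2⁻¹ * p n * (p m * θ m ^ 2) := fun n m => by ring
  simp only [hexpand]
  simp only [sum_add_distrib, sum_sub_distrib, ← mul_sum, ← sum_mul]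
  ring

lemma sq_sum_sub_variance_le_sum_sum_mul_mul_cos {p : ι → ℝ} (hp : ∀ n, 0 ≤ p n) (θ : ι → ℝ) :
    (∑ n, p n) ^ 2 - ((∑ n, p n) * ∑ n, p n * θ n ^ 2 - (∑ n, p n * θ n) ^ 2)
      ≤ ∑ n, ∑ m, p n * p m * Real.cos (θ n - θ m) := by
  rw [← sum_sum_mul_mul_one_sub_sq_div_two]
  gcongr with n _ m _
  · exact mul_nonneg (hp n) (hp m)
  · exact Real.one_sub_sq_div_two_le_cos

/-- For `|ψ(t)⟩ = Σ_n c_n e^{−iE_n t}|n⟩` with `Σ_n |c_n|² = 1`, the survival amplitude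
satisfies `|⟨ψ(t)|ψ(t+δt)⟩|² ≥ 1 − σ_E² δt²` where `σ_E²` is the energy variance. -/
theorem overlap_lower_bound_energy_variance {N : ℕ}
    (c : Fin N → ℂ) (E : Fin N → ℝ)
    (hnorm : ∑ n, ‖c n‖ ^ 2 = 1)
    (t δt : ℝ) :
    ‖(∑ n, (starRingEnd ℂ) (c n * Complex.exp (-Complex.I * E n * t)) *
        (c n * Complex.exp (-Complex.I * E n * (t + δt))))‖ ^ 2 ≥
      1 - ((∑ n, ‖c n‖ ^ 2 * E n ^ 2) - (∑ n, ‖c n‖ ^ 2 * E n) ^ 2) * δt ^ 2 := by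
  simp only [conj_mul_exp_evolution]
  rw [norm_sq_sum_mul_exp_mul_I]
  have hmean : ∑ n, ‖c n‖ ^ 2 * -(E n * δt) = -((∑ n, ‖c n‖ ^ 2 * E n) * δt) := by
    rw [sum_mul, ← sum_neg_distrib]
    exact sum_congr rfl fun n _ => by ring
  have hsecond : ∑ n, ‖c n‖ ^ 2 * (-(E n * δt)) ^ 2 = (∑ n, ‖c n‖ ^ 2 * E n ^ 2) * δt ^ 2 := by
    rw [sum_mul]
    exact sum_congr rfl fun n _ => by ring
  have hbound := sq_sum_sub_variance_le_sum_sum_mul_mul_cos (fun n => sq_nonneg ‖c n‖)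
    (fun n => -(E n * δt))
  rw [hnorm, hmean, hsecond] at hbound
  linarith
end
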